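/- arXiv:2303.15021 — 8 statements merged into one kernel-verified Lean document; each statement's English description precedes it below -/
import Mathlib

section
/- There exist a classical sentence α, a truth assignment M, and a choice function f such that ⟨M,f⟩ ⊨ₛ α∨¬α but ⟨M,f⟩ ⊭ₛ α|¬α; and there exist M', g with ⟨M',g⟩ ⊨ₛ α|¬α but ⟨M',g⟩ ⊭ₛ α∧¬α. Hence the interpolation of φ|ψ between φ∧ψ and φ∨ψ is strict. -/
/-- Classical propositional formulas: atoms, negation, conjunction. -/
inductive PF : Type where
  | atom : ℕ → PF
  | neg : PF → PF
  | conj : PF → PF → PF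

namespace PF

def eval (M : ℕ → Bool) : PF → Bool
  | atom n => M n
  | neg a => !(eval M a)
  | conj a b => eval M a && eval M b

def disj (a b : PF) : PF := neg (conj (neg a) (neg b))
def imp (a b : PF) : PF := neg (conj a (neg b))
def iff (a b : PF) : PF := conj (imp a b) (imp b a)

/-- Classical logical equivalence. -/
def equiv (a b : PF) : Prop := ∀ M : ℕ → Bool, eval M a = eval M b

end PF

/-- A choice function for pairs of classical sentences. -/
structure ChoiceFun where
  f : PF → PF → PF
  symm : ∀ a b, f a b = f b a
  choice : ∀ a b, f a b = a ∨ f a b = b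

/-- Sentences of the extended language L_s with superposition `sup`. -/
inductive SF : Type where
  | atom : ℕ → SF
  | neg : SF → SF
  | conj : SF → SF → SF
  | sup : SF → SF → SF

namespace SF
def disj (a b : SF) : SF := neg (conj (neg a) (neg b))
def imp (a b : SF) : SF := neg (conj a (neg b))
def iff (a b : SF) : SF := conj (imp a b) (imp b a)
end SF

/-- Embedding of classical sentences into L_s. -/
def PF.toSF : PF → SF
  | .atom n => SF.atom n
  | .neg a => SF.neg a.toSF
  | .conj a b => SF.conj a.toSF b.toSF

/-- The collapsing function generated by a choice function. -/
def collapse (c : ChoiceFun) : SF → PF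
  | .atom n => PF.atom n
  | .neg a => PF.neg (collapse c a)
  | .conj a b => PF.conj (collapse c a) (collapse c b)
  | .sup a b => c.f (collapse c a) (collapse c b)

/-- Satisfaction: ⟨M,f⟩ ⊨ₛ φ iff M ⊨ f̄(φ). -/
def Sat (M : ℕ → Bool) (c : ChoiceFun) (φ : SF) : Prop :=
  (collapse c φ).eval M = true

/-- A regular total ordering of Sen(L). -/
def RegularOrd (r : LinearOrder PF) : Prop :=
  ∀ a b a' b' : PF, ¬ PF.equiv a b → r.lt a b → PF.equiv a a' → PF.equiv b b' → r.lt a' b'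

/-- A ¬-decreasing total ordering of Sen(L). -/
def DecreasingOrd (r : LinearOrder PF) : Prop :=
  ∀ a b : PF, ¬ PF.equiv a b → (r.lt a b ↔ r.lt (PF.neg b) (PF.neg a))

/-- A regular choice function. -/
def RegularFun (f : PF → PF → PF) : Prop :=
  ∀ a a' b : PF, PF.equiv a a' → PF.equiv (f a b) (f a' b)


open scoped Classical in
noncomputable def pick (d : PF) (a b : PF) : PF :=
  if (a = PF.atom 0 ∧ b = PF.neg (PF.atom 0)) ∨ (b = PF.atom 0 ∧ a = PF.neg (PF.atom 0)) then d
  else if WellOrderingRel a b then a else b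

theorem pick_symm (d a b : PF) : pick d a b = pick d b a := by
  unfold pick
  by_cases h : (a = PF.atom 0 ∧ b = PF.neg (PF.atom 0)) ∨ (b = PF.atom 0 ∧ a = PF.neg (PF.atom 0))
  · rw [if_pos h, if_pos (Or.symm h)]
  · rw [if_neg h, if_neg (fun h' => h (Or.symm h'))]
    rcases trichotomous_of WellOrderingRel a b with h1 | h1 | h1
    · rw [if_pos h1, if_neg (asymm h1)]
    · subst h1; simp
    · rw [if_neg (asymm h1), if_pos h1]

theorem pick_choice (d : PF) (hd : d = PF.atom 0 ∨ d = PF.neg (PF.atom 0)) (a b : PF) :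
    pick d a b = a ∨ pick d a b = b := by
  unfold pick
  split_ifs with h1 h2
  · rcases h1 with ⟨ha, hb⟩ | ⟨hb, ha⟩ <;> rcases hd with hd | hd <;> subst_vars <;> tauto
  · tauto
  · tauto

noncomputable def cf (d : PF) (hd : d = PF.atom 0 ∨ d = PF.neg (PF.atom 0)) : ChoiceFun where
  f := pick d
  symm := pick_symm d
  choice := pick_choice d hd

theorem collapse_cf_sup (d : PF) (hd : d = PF.atom 0 ∨ d = PF.neg (PF.atom 0)) :
    collapse (cf d hd) (SF.sup (PF.atom 0).toSF (SF.neg (PF.atom 0).toSF)) = d := by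
  simp only [collapse, PF.toSF, cf, pick]
  rw [if_pos (Or.inl ⟨rfl, rfl⟩)]

/-- The interpolation of φ|ψ between φ∧ψ and φ∨ψ is strict. -/
theorem stmt5 :
    ∃ α : PF,
      (∃ (M : ℕ → Bool) (c : ChoiceFun),
        Sat M c (SF.disj α.toSF (SF.neg α.toSF)) ∧
        ¬ Sat M c (SF.sup α.toSF (SF.neg α.toSF))) ∧
      (∃ (M' : ℕ → Bool) (g : ChoiceFun),
        Sat M' g (SF.sup α.toSF (SF.neg α.toSF)) ∧
        ¬ Sat M' g (SF.conj α.toSF (SF.neg α.toSF))) := by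
  refine ⟨PF.atom 0, ⟨fun _ => true, cf (PF.neg (PF.atom 0)) (Or.inr rfl), ?_, ?_⟩,
    ⟨fun _ => true, cf (PF.atom 0) (Or.inl rfl), ?_, ?_⟩⟩
  · simp [Sat, SF.disj, collapse, PF.toSF, PF.eval, cf]
  · simp [Sat, collapse_cf_sup, PF.eval]
  · simp [Sat, collapse_cf_sup, PF.eval]
  · simp [Sat, collapse, PF.toSF, PF.eval, cf]
end

section
/- If X is a set of associative choice functions (each f ∈ X of the form min_< for a total ordering < of the classical sentences), then the superposition connective is associative with respect to ⊨_X: for all sentences φ, ψ, σ of L_s and every model ⟨M,f⟩ with f ∈ X, ⟨M,f⟩ ⊨ₛ (φ|ψ)|σ if and only if ⟨M,f⟩ ⊨ₛ φ|(ψ|σ). -/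
/-- Associativity of a choice function. -/
def AssocFun (c : ChoiceFun) : Prop :=
  ∀ a b d : PF, c.f (c.f a b) d = c.f a (c.f b d)

/-- For any set X of associative choice functions, | is associative w.r.t. ⊨_X. -/
theorem stmt8 (X : Set ChoiceFun) (hX : ∀ c ∈ X, AssocFun c) :
    ∀ c ∈ X, ∀ (M : ℕ → Bool) (φ ψ σ : SF),
      Sat M c (SF.sup (SF.sup φ ψ) σ) ↔ Sat M c (SF.sup φ (SF.sup ψ σ)) := by
  intro c hc M φ ψ σ
  simp [Sat, collapse, hX c hc (collapse c φ) (collapse c ψ) (collapse c σ)]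
end

section
/- If f is an essentially associative choice function on pairs of classical sentences, and α, β, γ are pairwise logically inequivalent sentences, then f is fully associative on them: f(f(α,β),γ) = f(α,f(β,γ)). -/
/-- An essentially associative choice function is fully associative on pairwise
logically inequivalent sentences. -/
theorem stmt10 (c : ChoiceFun)
    (hess : ∀ a b d : PF, PF.equiv (c.f (c.f a b) d) (c.f a (c.f b d)))
    (a b d : PF) (hab : ¬ PF.equiv a b) (hbd : ¬ PF.equiv b d) (had : ¬ PF.equiv a d) :
    c.f (c.f a b) d = c.f a (c.f b d) := by
  have key := hess a b d
  have hba : ¬ PF.equiv b a := fun h => hab (fun M => (h M).symm)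
  have hdb : ¬ PF.equiv d b := fun h => hbd (fun M => (h M).symm)
  have hda : ¬ PF.equiv d a := fun h => had (fun M => (h M).symm)
  have hL : c.f (c.f a b) d = a ∨ c.f (c.f a b) d = b ∨ c.f (c.f a b) d = d := by
    rcases c.choice (c.f a b) d with h | h
    · rcases c.choice a b with h' | h' <;> rw [h, h']
      · exact Or.inl rfl
      · exact Or.inr (Or.inl rfl)
    · exact Or.inr (Or.inr h)
  have hR : c.f a (c.f b d) = a ∨ c.f a (c.f b d) = b ∨ c.f a (c.f b d) = d := by
    rcases c.choice a (c.f b d) with h | h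
    · exact Or.inl h
    · rcases c.choice b d with h' | h' <;> rw [h, h']
      · exact Or.inr (Or.inl rfl)
      · exact Or.inr (Or.inr rfl)
  rcases hL with h1 | h1 | h1 <;> rcases hR with h2 | h2 | h2 <;>
    rw [h1, h2] <;> rw [h1, h2] at key <;>
    first
      | rfl
      | exact absurd key hab
      | exact absurd key hba
      | exact absurd key hbd
      | exact absurd key hdb
      | exact absurd key had
      | exact absurd key hda
end

section
/- If f is essentially associative but not associative, and the triple (α,β,γ) witnesses non-associativity of f, then α, β, γ are pairwise logically equivalent (α ∼ β ∼ γ). -/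
/-- If f is essentially associative but not associative, any triple witnessing
non-associativity consists of pairwise logically equivalent sentences. -/
theorem stmt11 (c : ChoiceFun)
    (hess : ∀ a b d : PF, PF.equiv (c.f (c.f a b) d) (c.f a (c.f b d)))
    (hnot : ¬ ∀ a b d : PF, c.f (c.f a b) d = c.f a (c.f b d))
    (a b d : PF)
    (hwit : c.f (c.f a b) d ≠ c.f a (c.f b d) ∨
            c.f (c.f a b) d ≠ c.f b (c.f a d) ∨
            c.f (c.f a d) b ≠ c.f a (c.f b d)) :
    PF.equiv a b ∧ PF.equiv b d ∧ PF.equiv a d := by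
  have T : ∀ {x y z : PF}, PF.equiv x y → PF.equiv y z → PF.equiv x z :=
    fun h1 h2 M => (h1 M).trans (h2 M)
  have S : ∀ {x y : PF}, PF.equiv x y → PF.equiv y x := fun h M => (h M).symm
  rcases c.choice a b with hab|hab <;> rcases c.choice b d with hbd|hbd <;>
    rcases c.choice a d with had|had
  all_goals
    have h1 := hess a b d
  all_goals
    have h2 := hess b a d
  all_goals
    simp only [c.symm b a, hab, hbd, had] at h1 h2
  all_goals
    first
    | (rcases hwit with h|h|h <;>
        simp only [c.symm b a, c.symm d a, c.symm d b, hab, hbd, had] at h <;>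
        exact absurd rfl h)
    | exact ⟨T (S h1) h2, S h2, S h1⟩
end

section
/- There is no regular total ordering < of the set of classical sentences (with at least three atomic sentences) that is ∧-monotonic, and none that is ∨-monotonic. -/
def WedgeMonotonic (r : LinearOrder PF) : Prop :=
  ∀ a b g : PF, ¬ PF.equiv (PF.conj a g) (PF.conj b g) →
    (r.lt a b ↔ r.lt (PF.conj a g) (PF.conj b g))

def VeeMonotonic (r : LinearOrder PF) : Prop :=
  ∀ a b g : PF, ¬ PF.equiv (PF.disj a g) (PF.disj b g) →
    (r.lt a b ↔ r.lt (PF.disj a g) (PF.disj b g))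

lemma keyConj (r : LinearOrder PF) (h1 : RegularOrd r) (h2 : WedgeMonotonic r)
    (a b c : ℕ) (hab : a ≠ b) (hac : a ≠ c) (hbc : b ≠ c)
    (hAB : r.lt (PF.atom a) (PF.atom b)) (hBC : r.lt (PF.atom b) (PF.atom c)) : False := by
  set A := PF.atom a
  set B := PF.atom b
  set C := PF.atom c
  -- witnessing model: everything except b is true
  set M : ℕ → Bool := fun n => decide (n ≠ b) with hM
  have evA : PF.eval M A = true := by simp [A, PF.eval, hM, hab]
  have evB : PF.eval M B = false := by simp [B, PF.eval, hM]
  have evC : PF.eval M C = true := by simp [C, PF.eval, hM, hbc.symm]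
  have ne1 : ¬ PF.equiv (PF.conj A (PF.neg B)) (PF.conj B (PF.neg B)) := by
    intro h; have := h M; simp [A, B, C, PF.eval, hM, hab, hac, hbc, hab.symm, hac.symm, hbc.symm] at this
  have ne2 : ¬ PF.equiv (PF.conj (PF.conj A (PF.neg B)) C) (PF.conj (PF.conj B (PF.neg B)) C) := by
    intro h; have := h M; simp [A, B, C, PF.eval, hM, hab, hac, hbc, hab.symm, hac.symm, hbc.symm] at this
  have ne3 : ¬ PF.equiv (PF.conj B (PF.neg B)) (PF.conj C (PF.neg B)) := by
    intro h; have := h M; simp [A, B, C, PF.eval, hM, hab, hac, hbc, hab.symm, hac.symm, hbc.symm] at this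
  have ne4 : ¬ PF.equiv (PF.conj (PF.conj B (PF.neg B)) A) (PF.conj (PF.conj C (PF.neg B)) A) := by
    intro h; have := h M; simp [A, B, C, PF.eval, hM, hab, hac, hbc, hab.symm, hac.symm, hbc.symm] at this
  have s1 : r.lt (PF.conj A (PF.neg B)) (PF.conj B (PF.neg B)) := (h2 A B (PF.neg B) ne1).mp hAB
  have s2 : r.lt (PF.conj (PF.conj A (PF.neg B)) C) (PF.conj (PF.conj B (PF.neg B)) C) :=
    (h2 _ _ C ne2).mp s1
  have s3 : r.lt (PF.conj B (PF.neg B)) (PF.conj C (PF.neg B)) := (h2 B C (PF.neg B) ne3).mp hBC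
  have s4 : r.lt (PF.conj (PF.conj B (PF.neg B)) A) (PF.conj (PF.conj C (PF.neg B)) A) :=
    (h2 _ _ A ne4).mp s3
  have eD : PF.equiv (PF.conj (PF.conj B (PF.neg B)) A) (PF.conj (PF.conj B (PF.neg B)) C) := by
    intro N; simp [PF.eval]
  have eφ : PF.equiv (PF.conj (PF.conj C (PF.neg B)) A) (PF.conj (PF.conj A (PF.neg B)) C) := by
    intro N
    simp only [PF.eval]
    cases hx : N a <;> cases hy : N b <;> cases hz : N c <;> simp [A, B, C, hx, hy, hz, PF.eval]
  have s5 : r.lt (PF.conj (PF.conj B (PF.neg B)) C) (PF.conj (PF.conj A (PF.neg B)) C) :=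
    h1 _ _ _ _ ne4 s4 eD eφ
  letI := r
  exact lt_asymm s2 s5

lemma keyDisj (r : LinearOrder PF) (h1 : RegularOrd r) (h2 : VeeMonotonic r)
    (a b c : ℕ) (hab : a ≠ b) (hac : a ≠ c) (hbc : b ≠ c)
    (hAB : r.lt (PF.atom a) (PF.atom b)) (hBC : r.lt (PF.atom b) (PF.atom c)) : False := by
  set A := PF.atom a
  set B := PF.atom b
  set C := PF.atom c
  -- witnessing model: only b is true
  set M : ℕ → Bool := fun n => decide (n = b) with hM
  have evA : PF.eval M A = false := by simp [A, PF.eval, hM, hab]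
  have evB : PF.eval M B = true := by simp [B, PF.eval, hM]
  have evC : PF.eval M C = false := by simp [C, PF.eval, hM, hbc.symm]
  have ne1 : ¬ PF.equiv (PF.disj A (PF.neg B)) (PF.disj B (PF.neg B)) := by
    intro h; have := h M; simp [A, B, C, PF.disj, PF.eval, hM, hab, hac, hbc, hab.symm, hac.symm, hbc.symm] at this
  have ne2 : ¬ PF.equiv (PF.disj (PF.disj A (PF.neg B)) C) (PF.disj (PF.disj B (PF.neg B)) C) := by
    intro h; have := h M; simp [A, B, C, PF.disj, PF.eval, hM, hab, hac, hbc, hab.symm, hac.symm, hbc.symm] at this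
  have ne3 : ¬ PF.equiv (PF.disj B (PF.neg B)) (PF.disj C (PF.neg B)) := by
    intro h; have := h M; simp [A, B, C, PF.disj, PF.eval, hM, hab, hac, hbc, hab.symm, hac.symm, hbc.symm] at this
  have ne4 : ¬ PF.equiv (PF.disj (PF.disj B (PF.neg B)) A) (PF.disj (PF.disj C (PF.neg B)) A) := by
    intro h; have := h M; simp [A, B, C, PF.disj, PF.eval, hM, hab, hac, hbc, hab.symm, hac.symm, hbc.symm] at this
  have s1 : r.lt (PF.disj A (PF.neg B)) (PF.disj B (PF.neg B)) := (h2 A B (PF.neg B) ne1).mp hAB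
  have s2 : r.lt (PF.disj (PF.disj A (PF.neg B)) C) (PF.disj (PF.disj B (PF.neg B)) C) :=
    (h2 _ _ C ne2).mp s1
  have s3 : r.lt (PF.disj B (PF.neg B)) (PF.disj C (PF.neg B)) := (h2 B C (PF.neg B) ne3).mp hBC
  have s4 : r.lt (PF.disj (PF.disj B (PF.neg B)) A) (PF.disj (PF.disj C (PF.neg B)) A) :=
    (h2 _ _ A ne4).mp s3
  -- from s4, use regularity to compare with s2
  have eT : PF.equiv (PF.disj (PF.disj B (PF.neg B)) A) (PF.disj (PF.disj B (PF.neg B)) C) := by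
    intro N; simp [PF.disj, PF.eval]
  have eφ : PF.equiv (PF.disj (PF.disj C (PF.neg B)) A) (PF.disj (PF.disj A (PF.neg B)) C) := by
    intro N
    simp only [PF.disj, PF.eval]
    cases hx : N a <;> cases hy : N b <;> cases hz : N c <;> simp [A, B, C, hx, hy, hz, PF.eval]
  have s5 : r.lt (PF.disj (PF.disj B (PF.neg B)) C) (PF.disj (PF.disj A (PF.neg B)) C) :=
    h1 _ _ _ _ ne4 s4 eT eφ
  letI := r
  exact lt_asymm s2 s5

lemma sortCases (r : LinearOrder PF)
    (key : ∀ a b c : ℕ, a ≠ b → a ≠ c → b ≠ c →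
      r.lt (PF.atom a) (PF.atom b) → r.lt (PF.atom b) (PF.atom c) → False) : False := by
  letI := r
  have hne : ∀ m n : ℕ, m ≠ n → PF.atom m ≠ PF.atom n := by
    intro m n h hc; exact h (PF.atom.inj hc)
  rcases lt_or_gt_of_ne (hne 0 1 (by decide)) with h01 | h10
  · rcases lt_or_gt_of_ne (hne 1 2 (by decide)) with h12 | h21
    · exact key 0 1 2 (by decide) (by decide) (by decide) h01 h12
    · rcases lt_or_gt_of_ne (hne 0 2 (by decide)) with h02 | h20
      · exact key 0 2 1 (by decide) (by decide) (by decide) h02 h21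
      · exact key 2 0 1 (by decide) (by decide) (by decide) h20 h01
  · rcases lt_or_gt_of_ne (hne 1 2 (by decide)) with h12 | h21
    · rcases lt_or_gt_of_ne (hne 0 2 (by decide)) with h02 | h20
      · exact key 1 0 2 (by decide) (by decide) (by decide) h10 h02
      · exact key 1 2 0 (by decide) (by decide) (by decide) h12 h20
    · exact key 2 1 0 (by decide) (by decide) (by decide) h21 h10

/-- No regular total ordering of Sen(L) is ∧-monotonic, and none is ∨-monotonic. -/
theorem stmt13 :
    (¬ ∃ r : LinearOrder PF, RegularOrd r ∧ WedgeMonotonic r) ∧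
    (¬ ∃ r : LinearOrder PF, RegularOrd r ∧ VeeMonotonic r) := by
  constructor
  · rintro ⟨r, h1, h2⟩
    exact sortCases r (fun a b c hab hac hbc h h' => keyConj r h1 h2 a b c hab hac hbc h h')
  · rintro ⟨r, h1, h2⟩
    exact sortCases r (fun a b c hab hac hbc h h' => keyDisj r h1 h2 a b c hab hac hbc h h')
end

section
/- If f = min_< for a regular total ordering <, then f is ¬-decreasing if and only if for every truth assignment M and all sentences φ, ψ of L_s, ⟨M,f⟩ ⊨ₛ φ∧¬ψ → (φ|ψ ↔ ¬φ|¬ψ). -/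
lemma collapse_toSF (c : ChoiceFun) (a : PF) : collapse c a.toSF = a := by
  induction a <;> simp [PF.toSF, collapse, *]

lemma equiv_negneg (a : PF) : PF.equiv (PF.neg (PF.neg a)) a := by
  intro M; simp [PF.eval]

lemma sat_iff (M : ℕ → Bool) (c : ChoiceFun) (φ ψ : SF) :
    Sat M c (SF.imp (SF.conj φ (SF.neg ψ))
      (SF.iff (SF.sup φ ψ) (SF.sup (SF.neg φ) (SF.neg ψ)))) ↔
    ((collapse c φ).eval M = true → (collapse c ψ).eval M = false →
      (c.f (collapse c φ) (collapse c ψ)).eval M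
        = (c.f (PF.neg (collapse c φ)) (PF.neg (collapse c ψ))).eval M) := by
  simp only [Sat, SF.imp, SF.iff, collapse, PF.imp, PF.iff, PF.eval]
  cases (collapse c φ).eval M <;> cases (collapse c ψ).eval M <;>
    cases (c.f (collapse c φ) (collapse c ψ)).eval M <;>
    cases (c.f (PF.neg (collapse c φ)) (PF.neg (collapse c ψ))).eval M <;>
    simp_all [PF.eval]

/-- Syntactic characterization of ¬-decreasingness: f = min_< (< regular) is
¬-decreasing iff every model satisfies φ∧¬ψ → (φ|ψ ↔ ¬φ|¬ψ). -/
theorem stmt15 (r : LinearOrder PF) (hreg : RegularOrd r) (c : ChoiceFun)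
    (hmin : ∀ a b, c.f a b = r.min a b) :
    DecreasingOrd r ↔
    ∀ (M : ℕ → Bool) (φ ψ : SF),
      Sat M c (SF.imp (SF.conj φ (SF.neg ψ))
                (SF.iff (SF.sup φ ψ) (SF.sup (SF.neg φ) (SF.neg ψ)))) := by
  letI := r
  constructor
  · intro hd M φ ψ
    rw [sat_iff]
    intro ha hb
    set a := collapse c φ with hA
    set b := collapse c ψ with hB
    have hne : ¬ PF.equiv a b := by
      intro he; have := he M; rw [ha, hb] at this; exact Bool.true_eq_false.mp this
    rcases lt_trichotomy a b with h | h | h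
    · have h1 : c.f a b = a := by rw [hmin]; exact min_eq_left h.le
      have h2 : c.f (PF.neg a) (PF.neg b) = PF.neg b := by
        rw [hmin]; exact min_eq_right ((hd a b hne).mp h).le
      rw [h1, h2, ha]; simp [PF.eval, hb]
    · exact absurd (fun N => by rw [h]) hne
    · have hne' : ¬ PF.equiv b a := fun he => hne fun N => (he N).symm
      have h1 : c.f a b = b := by rw [hmin]; exact min_eq_right h.le
      have h2 : c.f (PF.neg a) (PF.neg b) = PF.neg a := by
        rw [hmin]; exact min_eq_left ((hd b a hne').mp h).le
      rw [h1, h2, hb]; simp [PF.eval, ha]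
  · intro H
    have L : ∀ a b : PF, ¬ PF.equiv a b → r.lt a b → r.lt (PF.neg b) (PF.neg a) := by
      intro a b hne hab
      have hM : ∃ M, a.eval M ≠ b.eval M := by
        by_contra hc; push_neg at hc; exact hne fun M => hc M
      obtain ⟨M, hM⟩ := hM
      have hab' : a ≠ b := ne_of_lt hab
      have hnn : PF.neg b ≠ PF.neg a := fun h => hab' (PF.neg.inj h).symm
      rcases Bool.eq_false_or_eq_true (a.eval M) with hA | hA
      · -- a true, b false; use φ := a, ψ := b
        have hB : b.eval M = false := by
          cases hBv : b.eval M
          · rfl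
          · exact absurd (hA.trans hBv.symm) hM
        have := (sat_iff M c a.toSF b.toSF).mp (H M a.toSF b.toSF)
        rw [collapse_toSF, collapse_toSF] at this
        have heq := this hA hB
        have h1 : c.f a b = a := by rw [hmin]; exact min_eq_left hab.le
        rw [h1, hA] at heq
        have hmb : c.f (PF.neg a) (PF.neg b) = PF.neg b := by
          rcases c.choice (PF.neg a) (PF.neg b) with h | h
          · rw [h] at heq; simp [PF.eval, hA] at heq
          · exact h
        rw [hmin] at hmb
        exact lt_of_le_of_ne (min_eq_right_iff.mp hmb) hnn
      · -- a false, b true; use φ := b, ψ := a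
        have hB : b.eval M = true := by
          cases hBv : b.eval M
          · exact absurd (hA.trans hBv.symm) hM
          · rfl
        have := (sat_iff M c b.toSF a.toSF).mp (H M b.toSF a.toSF)
        rw [collapse_toSF, collapse_toSF] at this
        have heq := this hB hA
        have h1 : c.f b a = a := by rw [hmin, min_comm]; exact min_eq_left hab.le
        rw [h1, hA] at heq
        have hmb : c.f (PF.neg b) (PF.neg a) = PF.neg b := by
          rcases c.choice (PF.neg b) (PF.neg a) with h | h
          · exact h
          · rw [h] at heq; simp [PF.eval, hA] at heq
        rw [hmin] at hmb
        exact lt_of_le_of_ne (min_eq_left_iff.mp hmb) hnn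
    intro a b hne
    constructor
    · exact L a b hne
    · intro h
      have hne' : ¬ PF.equiv (PF.neg b) (PF.neg a) := by
        intro he; exact hne fun M => by
          have := he M; simp [PF.eval] at this; exact this.symm
      have h2 := L (PF.neg b) (PF.neg a) hne' h
      have hne'' : ¬ PF.equiv (PF.neg (PF.neg a)) (PF.neg (PF.neg b)) := by
        intro he; exact hne fun M => by
          have := he M; simp [PF.eval] at this; exact this
      exact hreg _ _ a b hne'' h2 (equiv_negneg a) (equiv_negneg b)
end

section
/- There exists a regular ¬-decreasing total ordering of the set of classical propositional sentences (and hence a regular ¬-decreasing associative choice function). -/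
namespace Stmt16Aux

/-- Wrapper around truth functions, to carry a bespoke well-ordering. -/
structure TW where
  val : (ℕ → Bool) → Bool

noncomputable instance : LinearOrder TW := IsWellOrder.linearOrder WellOrderingRel

abbrev K := TW ⊕ₗ TWᵒᵈ

def F (a : PF) : TW := ⟨fun M => a.eval M⟩

lemma F_negneg (a : PF) : F a.neg.neg = F a := by
  simp only [F, PF.eval, Bool.not_not]

noncomputable def G (f : TW) : K :=
  if f.val (fun _ => false) then toLex (Sum.inr (OrderDual.toDual ⟨fun M => !(f.val M)⟩))
  else toLex (Sum.inl f)

noncomputable def key (a : PF) : K := G (F a)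

lemma equiv_iff {a b : PF} : PF.equiv a b ↔ F a = F b := by
  constructor
  · intro h; simp only [F]; congr 1; funext M; exact h M
  · intro h M
    have := congrArg TW.val h
    exact congrFun this M

lemma key_eq_iff {a b : PF} : key a = key b ↔ F a = F b := by
  constructor
  · intro h
    unfold key G at h
    by_cases ha : (F a).val (fun _ => false) <;> by_cases hb : (F b).val (fun _ => false) <;>
      simp [ha, hb, TW.mk.injEq] at h
    · have hv : (F a).val = (F b).val := by
        funext M; have := congrFun h M; simpa using this
      exact congrArg TW.mk hv
    · exact h
  · intro h; unfold key; rw [h]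

lemma key_negneg (a : PF) : key a.neg.neg = key a := by
  unfold key; rw [F_negneg]

lemma key_neg_lt {a b : PF} (h : key a < key b) : key b.neg < key a.neg := by
  unfold key G at h ⊢
  have hna : (F a.neg).val (fun _ => false) = !((F a).val (fun _ => false)) := rfl
  have hnb : (F b.neg).val (fun _ => false) = !((F b).val (fun _ => false)) := rfl
  have ea : F a.neg = ⟨fun M => !((F a).val M)⟩ := rfl
  have eb : F b.neg = ⟨fun M => !((F b).val M)⟩ := rfl
  have ca : (⟨fun M => !((F a.neg).val M)⟩ : TW) = F a := by
    simp only [F, PF.eval, Bool.not_not]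
  have cb : (⟨fun M => !((F b.neg).val M)⟩ : TW) = F b := by
    simp only [F, PF.eval, Bool.not_not]
  by_cases ha : (F a).val (fun _ => false) <;> by_cases hb : (F b).val (fun _ => false) <;>
    simp only [ha, hb, if_true, if_false, hna, hnb, Bool.not_true, Bool.not_false,
      Bool.false_eq_true, ca, cb, ea, eb, Bool.not_not, reduceIte] at h ⊢
  · rw [Sum.Lex.inr_lt_inr_iff] at h
    rw [Sum.Lex.inl_lt_inl_iff]
    exact OrderDual.toDual_lt_toDual.mp h
  · exact absurd h Sum.Lex.not_inr_lt_inl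
  · exact Sum.Lex.inl_lt_inr _ _
  · rw [Sum.Lex.inl_lt_inl_iff] at h
    rw [Sum.Lex.inr_lt_inr_iff]
    exact OrderDual.toDual_lt_toDual.mpr h


def ltR (a b : PF) : Prop :=
  key a < key b ∨ (key a = key b ∧ WellOrderingRel a b)

instance : IsStrictTotalOrder PF ltR where
  trichotomous a b := by
    suffices H : ltR a b ∨ a = b ∨ ltR b a by
      intro hab hba; rcases H with H | H | H; exacts [absurd H hab, H, absurd H hba]
    rcases lt_trichotomy (key a) (key b) with h | h | h
    · exact Or.inl (Or.inl h)
    · rcases trichotomous_of WellOrderingRel a b with hw | hw | hw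
      · exact Or.inl (Or.inr ⟨h, hw⟩)
      · exact Or.inr (Or.inl hw)
      · exact Or.inr (Or.inr (Or.inr ⟨h.symm, hw⟩))
    · exact Or.inr (Or.inr (Or.inl h))
  irrefl a h := by
    rcases h with h | ⟨_, h⟩
    · exact lt_irrefl _ h
    · exact irrefl_of WellOrderingRel a h
  trans a b c hab hbc := by
    rcases hab with hab | ⟨eab, wab⟩ <;> rcases hbc with hbc | ⟨ebc, wbc⟩
    · exact Or.inl (lt_trans hab hbc)
    · exact Or.inl (ebc ▸ hab)
    · exact Or.inl (eab ▸ hbc)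
    · exact Or.inr ⟨eab.trans ebc, trans_of WellOrderingRel wab wbc⟩

noncomputable def r : LinearOrder PF := @linearOrderOfSTO PF ltR _ (Classical.decRel _)

lemma r_lt_iff {a b : PF} : r.lt a b ↔ ltR a b := Iff.rfl

lemma key_ne_of_not_equiv {a b : PF} (h : ¬ PF.equiv a b) : key a ≠ key b := by
  intro hk; exact h (equiv_iff.mpr (key_eq_iff.mp hk))

lemma lt_iff_key_lt {a b : PF} (h : ¬ PF.equiv a b) : r.lt a b ↔ key a < key b := by
  rw [r_lt_iff]
  constructor
  · rintro (hk | ⟨hk, _⟩)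
    · exact hk
    · exact absurd hk (key_ne_of_not_equiv h)
  · exact Or.inl

lemma not_equiv_neg {a b : PF} (h : ¬ PF.equiv a b) : ¬ PF.equiv b.neg a.neg := by
  intro hn
  exact h fun M => by have := hn M; simp [PF.eval] at this; simp [this]

end Stmt16Aux

open Stmt16Aux

/-- There exist regular ¬-decreasing total orderings of Sen(L), and hence
regular ¬-decreasing (associative) choice functions. -/
theorem stmt16 :
    ∃ (r : LinearOrder PF) (c : ChoiceFun),
      RegularOrd r ∧ DecreasingOrd r ∧ ∀ a b, c.f a b = r.min a b := by
  refine ⟨Stmt16Aux.r, ⟨fun a b => Stmt16Aux.r.min a b, ?_, ?_⟩, ?_, ?_, fun a b => rfl⟩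
  · intro a b; letI := Stmt16Aux.r; exact min_comm a b
  · intro a b; letI := Stmt16Aux.r; exact min_choice a b
  · intro a b a' b' hne hlt ha hb
    have hne' : ¬ PF.equiv a' b' := by
      intro h
      exact hne fun M => by rw [ha M, h M, ← hb M]
    have hk : key a < key b := (lt_iff_key_lt hne).mp hlt
    have ea : key a' = key a := key_eq_iff.mpr (equiv_iff.mp ha).symm
    have eb : key b' = key b := key_eq_iff.mpr (equiv_iff.mp hb).symm
    exact (lt_iff_key_lt hne').mpr (by rw [ea, eb]; exact hk)
  · intro a b hne
    rw [lt_iff_key_lt hne, lt_iff_key_lt (not_equiv_neg hne)]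
    constructor
    · exact key_neg_lt
    · intro h
      have := key_neg_lt h
      rwa [key_negneg, key_negneg] at this
end

section
/- If f = min_< for a regular ¬-decreasing total ordering < of the classical sentences, then for every truth assignment M and all sentences φ, ψ, σ of L_s: ⟨M,f⟩ ⊨ₛ φ∘(ψ|σ) ↔ (φ∘ψ)|(φ∘σ), where φ∘ψ abbreviates ¬(¬φ|¬ψ). That is, the dual connective ∘ distributes over | in every model with ¬-decreasing regular f. -/
/-- The dual connective φ∘ψ := ¬(¬φ|¬ψ). -/
def SF.circ (a b : SF) : SF := SF.neg (SF.sup (SF.neg a) (SF.neg b))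


private lemma pf_equiv_symm {a b : PF} (h : PF.equiv a b) : PF.equiv b a :=
  fun M => (h M).symm

private lemma pf_equiv_refl (a : PF) : PF.equiv a a := fun _ => rfl

/-- Key lemma: min(¬a,¬b) evaluates like ¬max(a,b). -/
private lemma eval_min_neg (r : LinearOrder PF) (hdec : DecreasingOrd r)
    (M : ℕ → Bool) (a b : PF) :
    (r.min a.neg b.neg).eval M = !((r.max a b).eval M) := by
  letI := r
  by_cases h : PF.equiv a b
  · have hab : a.eval M = b.eval M := h M
    rcases min_cases a.neg b.neg with ⟨h1, -⟩ | ⟨h1, -⟩ <;>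
      rcases max_cases a b with ⟨h2, -⟩ | ⟨h2, -⟩ <;>
      simp_all [PF.eval]
  · rcases lt_trichotomy a b with hlt | heq | hlt
    · have hn : b.neg < a.neg := (hdec a b h).mp hlt
      rw [show r.min a.neg b.neg = min a.neg b.neg from rfl,
        show r.max a b = max a b from rfl, min_eq_right hn.le, max_eq_right hlt.le]
      rfl
    · exact absurd (heq ▸ pf_equiv_refl a) h
    · have hba : ¬ PF.equiv b a := fun hb => h (pf_equiv_symm hb)
      have hn : a.neg < b.neg := (hdec b a hba).mp hlt
      rw [show r.min a.neg b.neg = min a.neg b.neg from rfl,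
        show r.max a b = max a b from rfl, min_eq_left hn.le, max_eq_left hlt.le]
      rfl

/-- Regularity: max is eval-congruent w.r.t. logical equivalence in the right slot. -/
private lemma eval_max_congr (r : LinearOrder PF) (hreg : RegularOrd r)
    (M : ℕ → Bool) (p q s : PF) (h : PF.equiv q s) :
    (r.max p q).eval M = (r.max p s).eval M := by
  letI := r
  by_cases hpq : PF.equiv p q
  · have hps : PF.equiv p s := fun M => (hpq M).trans (h M)
    rcases max_cases p q with ⟨h1, -⟩ | ⟨h1, -⟩ <;>
      rcases max_cases p s with ⟨h2, -⟩ | ⟨h2, -⟩ <;>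
      simp_all [hpq M, hps M, h M]
  · rcases lt_trichotomy p q with hlt | heq | hlt
    · have hps : r.lt p s := hreg p q p s hpq hlt (pf_equiv_refl p) h
      rw [show r.max p q = max p q from rfl, show r.max p s = max p s from rfl,
        max_eq_right hlt.le, max_eq_right (le_of_lt (hps : p < s))]
      exact h M
    · exact absurd (heq ▸ pf_equiv_refl p) hpq
    · have hqp : ¬ PF.equiv q p := fun hq => hpq (pf_equiv_symm hq)
      have hsp : r.lt s p := hreg q p s p hqp hlt h (pf_equiv_refl p)
      rw [show r.max p q = max p q from rfl, show r.max p s = max p s from rfl,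
        max_eq_left hlt.le, max_eq_left (le_of_lt (hsp : s < p))]

private lemma key (r : LinearOrder PF) (hreg : RegularOrd r) (hdec : DecreasingOrd r)
    (M : ℕ → Bool) (p q s : PF) :
    (PF.neg (r.min p.neg (r.min q s).neg)).eval M
      = (r.min (PF.neg (r.min p.neg q.neg)) (PF.neg (r.min p.neg s.neg))).eval M := by
  letI := r
  set A := r.min p.neg q.neg with hA
  set B := r.min p.neg s.neg with hB
  have hRHS : (r.min A.neg B.neg).eval M = !((r.max A B).eval M) :=
    eval_min_neg r hdec M A B
  have hLHS : (PF.neg (r.min p.neg (r.min q s).neg)).eval M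
      = (r.max p (r.min q s)).eval M := by
    have := eval_min_neg r hdec M p (r.min q s)
    simp [PF.eval, this]
  have hAe : A.eval M = !((r.max p q).eval M) := eval_min_neg r hdec M p q
  have hBe : B.eval M = !((r.max p s).eval M) := eval_min_neg r hdec M p s
  rw [hLHS, hRHS]
  by_cases hqs : PF.equiv q s
  · have hmax : (r.max p q).eval M = (r.max p s).eval M :=
      eval_max_congr r hreg M p q s hqs
    have hAB : A.eval M = B.eval M := by rw [hAe, hBe, hmax]
    have hmaxAB : (r.max A B).eval M = A.eval M := by
      rcases max_cases A B with ⟨h1, -⟩ | ⟨h1, -⟩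
      · rw [show r.max A B = max A B from rfl, h1]
      · rw [show r.max A B = max A B from rfl, h1, hAB]
    have hminqs : (r.min q s).eval M = q.eval M := by
      rcases min_cases q s with ⟨h1, -⟩ | ⟨h1, -⟩
      · rw [show r.min q s = min q s from rfl, h1]
      · rw [show r.min q s = min q s from rfl, h1, (hqs M).symm]
    have hmaxp : (r.max p (r.min q s)).eval M = (r.max p q).eval M :=
      eval_max_congr r hreg M p (r.min q s) q (fun N => by
        rcases min_cases q s with ⟨h1, -⟩ | ⟨h1, -⟩
        · rw [show r.min q s = min q s from rfl, h1]
        · rw [show r.min q s = min q s from rfl, h1]; exact (hqs N).symm)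
    rw [hmaxAB, hAe, hmaxp, Bool.not_not]
  · rcases lt_trichotomy q s with hlt | heq | hlt
    · -- q < s : min q s = q, B ≤ A
      have hmn : (r.min q s) = q := min_eq_left hlt.le
      have hn : s.neg < q.neg := (hdec q s hqs).mp hlt
      have hBA : B ≤ A := by
        rw [hA, hB]
        exact le_min (min_le_left _ _) (le_trans (min_le_right p.neg s.neg) hn.le)
      have : (r.max A B) = A := max_eq_left hBA
      rw [this, hmn, hAe, Bool.not_not]
    · exact absurd (heq ▸ pf_equiv_refl q) hqs
    · -- s < q : min q s = s, A ≤ B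
      have hmn : (r.min q s) = s := min_eq_right hlt.le
      have hsq : ¬ PF.equiv s q := fun hb => hqs (pf_equiv_symm hb)
      have hn : q.neg < s.neg := (hdec s q hsq).mp hlt
      have hAB : A ≤ B := by
        rw [hA, hB]
        exact le_min (min_le_left _ _) (le_trans (min_le_right p.neg q.neg) hn.le)
      have : (r.max A B) = B := max_eq_right hAB
      rw [this, hmn, hBe, Bool.not_not]

/-- For ¬-decreasing regular f = min_<, the dual connective ∘ distributes over |
in every model ⟨M,f⟩. -/
theorem stmt19 (r : LinearOrder PF) (hreg : RegularOrd r) (hdec : DecreasingOrd r)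
    (c : ChoiceFun) (hmin : ∀ a b, c.f a b = r.min a b) :
    ∀ (M : ℕ → Bool) (φ ψ σ : SF),
      Sat M c (SF.iff (SF.circ φ (SF.sup ψ σ)) (SF.sup (SF.circ φ ψ) (SF.circ φ σ))) := by
  intro M φ ψ σ
  have hk := key r hreg hdec M (collapse c φ) (collapse c ψ) (collapse c σ)
  simp only [Sat, SF.iff, SF.imp, SF.circ, collapse, hmin, PF.eval] at *
  rw [hk]
  cases hx : (r.min (PF.neg (r.min (PF.neg (collapse c φ)) (PF.neg (collapse c ψ))))
      (PF.neg (r.min (PF.neg (collapse c φ)) (PF.neg (collapse c σ))))).eval M <;> simp [hx]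
end
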